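/- Upper bound for the explicit scalar scheme: let ψ be a saturation with saturation level α, let U > 0 satisfy |u_{i+1/2}| ≤ U for all i, and let γ = inf_{s ∈ [0,α)} (α − s)/(α·ψ(s)). If 0 ≤ ρ_i ≤ α for all i ∈ ℤ and Δt ≤ γ·Δx/(2U), then the updated values satisfy ρ_i' ≤ α for all i ∈ ℤ. -/

import Mathlib

/-- A *saturation* with saturation level `α > 0`: a continuous non-increasing function
`ψ : [0,∞) → ℝ` with `ψ α = 0` and `(α − s)·ψ s > 0` for every `s ≥ 0`, `s ≠ α`. -/
def IsSaturation (ψ : ℝ → ℝ) (α : ℝ) : Prop :=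
  0 < α ∧ ContinuousOn ψ (Set.Ici 0) ∧
    (∀ s₁ s₂, 0 ≤ s₁ → s₁ ≤ s₂ → ψ s₂ ≤ ψ s₁) ∧
    ψ α = 0 ∧ ∀ s, 0 ≤ s → s ≠ α → 0 < (α - s) * ψ s

/-- The minmod limiter. -/
noncomputable def minmod (a b c : ℝ) : ℝ :=
  if 0 < a ∧ 0 < b ∧ 0 < c then min a (min b c)
  else if a < 0 ∧ b < 0 ∧ c < 0 then max a (max b c)
  else 0

/-- Minmod mmSlope `(ρ_x)_i`. -/
noncomputable def mmSlope (θ Δx : ℝ) (ρ : ℤ → ℝ) (i : ℤ) : ℝ :=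
  minmod (θ * (ρ (i + 1) - ρ i) / Δx) ((ρ (i + 1) - ρ (i - 1)) / (2 * Δx))
    (θ * (ρ i - ρ (i - 1)) / Δx)

/-- East reconstruction `ρ_i^E`. -/
noncomputable def recE (θ Δx : ℝ) (ρ : ℤ → ℝ) (i : ℤ) : ℝ :=
  ρ i + Δx / 2 * mmSlope θ Δx ρ i

/-- West reconstruction `ρ_i^W`. -/
noncomputable def recW (θ Δx : ℝ) (ρ : ℤ → ℝ) (i : ℤ) : ℝ :=
  ρ i - Δx / 2 * mmSlope θ Δx ρ i

/-- Numerical flux `F_{i+1/2}` of the explicit scalar scheme (with `θ = 2`);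
`u i` denotes the interface velocity `u_{i+1/2}`. -/
noncomputable def numFlux (ψ : ℝ → ℝ) (Δx : ℝ) (ρ u : ℤ → ℝ) (i : ℤ) : ℝ :=
  recE 2 Δx ρ i * ψ (recW 2 Δx ρ (i + 1)) * max (u i) 0 +
    recW 2 Δx ρ (i + 1) * ψ (recE 2 Δx ρ i) * min (u i) 0

/-- The updated cell values `ρ_i'` of the explicit scalar scheme. -/
noncomputable def updateExplicit (ψ : ℝ → ℝ) (Δx Δt : ℝ) (ρ u : ℤ → ℝ) (i : ℤ) : ℝ :=
  ρ i - Δt / Δx * (numFlux ψ Δx ρ u i - numFlux ψ Δx ρ u (i - 1))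

/-- The CFL constant `γ = inf_{s ∈ [0,α)} (α − s)/(α·ψ s)`. -/
noncomputable def gammaCFL (ψ : ℝ → ℝ) (α : ℝ) : ℝ :=
  sInf ((fun s => (α - s) / (α * ψ s)) '' Set.Ico 0 α)


lemma rec_bounds (Δx α : ℝ) (hΔx : 0 < Δx) (ρ : ℤ → ℝ)
    (hρ : ∀ i, 0 ≤ ρ i ∧ ρ i ≤ α) (i : ℤ) :
    0 ≤ recE 2 Δx ρ i ∧ recE 2 Δx ρ i ≤ α ∧ 0 ≤ recW 2 Δx ρ i ∧ recW 2 Δx ρ i ≤ α := by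
  have h1 := hρ i; have h2 := hρ (i + 1); have h3 := hρ (i - 1)
  have hx : Δx ≠ 0 := ne_of_gt hΔx
  have ea : Δx / 2 * (2 * (ρ (i + 1) - ρ i) / Δx) = ρ (i + 1) - ρ i := by
    field_simp
  have ec : Δx / 2 * (2 * (ρ i - ρ (i - 1)) / Δx) = ρ i - ρ (i - 1) := by
    field_simp
  unfold recE recW mmSlope minmod
  split_ifs with hpos hneg
  · obtain ⟨ha, hb, hc⟩ := hpos
    set σ := min (2 * (ρ (i + 1) - ρ i) / Δx)
      (min ((ρ (i + 1) - ρ (i - 1)) / (2 * Δx)) (2 * (ρ i - ρ (i - 1)) / Δx)) with hσ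
    have hσa : σ ≤ 2 * (ρ (i + 1) - ρ i) / Δx := min_le_left _ _
    have hσc : σ ≤ 2 * (ρ i - ρ (i - 1)) / Δx := le_trans (min_le_right _ _) (min_le_right _ _)
    have hσ0 : 0 < σ := lt_min ha (lt_min hb hc)
    have h4 : Δx / 2 * σ ≤ ρ (i + 1) - ρ i := by
      calc Δx / 2 * σ ≤ Δx / 2 * (2 * (ρ (i + 1) - ρ i) / Δx) :=
            mul_le_mul_of_nonneg_left hσa (by positivity)
        _ = ρ (i + 1) - ρ i := ea
    have h5 : Δx / 2 * σ ≤ ρ i - ρ (i - 1) := by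
      calc Δx / 2 * σ ≤ Δx / 2 * (2 * (ρ i - ρ (i - 1)) / Δx) :=
            mul_le_mul_of_nonneg_left hσc (by positivity)
        _ = ρ i - ρ (i - 1) := ec
    have h6 : 0 ≤ Δx / 2 * σ := by positivity
    refine ⟨by linarith, by linarith, by linarith, by linarith⟩
  · obtain ⟨ha, hb, hc⟩ := hneg
    set σ := max (2 * (ρ (i + 1) - ρ i) / Δx)
      (max ((ρ (i + 1) - ρ (i - 1)) / (2 * Δx)) (2 * (ρ i - ρ (i - 1)) / Δx)) with hσ
    have hσa : 2 * (ρ (i + 1) - ρ i) / Δx ≤ σ := le_max_left _ _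
    have hσc : 2 * (ρ i - ρ (i - 1)) / Δx ≤ σ := le_trans (le_max_right _ _) (le_max_right _ _)
    have hσ0 : σ < 0 := max_lt ha (max_lt hb hc)
    have h4 : ρ (i + 1) - ρ i ≤ Δx / 2 * σ := by
      calc ρ (i + 1) - ρ i = Δx / 2 * (2 * (ρ (i + 1) - ρ i) / Δx) := ea.symm
        _ ≤ Δx / 2 * σ := mul_le_mul_of_nonneg_left hσa (by positivity)
    have h5 : ρ i - ρ (i - 1) ≤ Δx / 2 * σ := by
      calc ρ i - ρ (i - 1) = Δx / 2 * (2 * (ρ i - ρ (i - 1)) / Δx) := ec.symm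
        _ ≤ Δx / 2 * σ := mul_le_mul_of_nonneg_left hσc (by positivity)
    have h6 : Δx / 2 * σ ≤ 0 := by
      have : 0 ≤ Δx / 2 := by positivity
      exact mul_nonpos_of_nonneg_of_nonpos this hσ0.le
    refine ⟨by linarith, by linarith, by linarith, by linarith⟩
  · simp only [mul_zero, add_zero, sub_zero]
    exact ⟨h1.1, h1.2, h1.1, h1.2⟩

set_option maxHeartbeats 1000000 in
/-- Upper bound of the explicit scalar scheme under the CFL condition
`Δt ≤ γ·Δx/(2U)`. -/
theorem explicit_scalar_upper_bound
    (ψ : ℝ → ℝ) (α : ℝ) (hψ : IsSaturation ψ α)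
    (Δx Δt : ℝ) (hΔx : 0 < Δx) (hΔt : 0 < Δt)
    (ρ u : ℤ → ℝ) (U : ℝ) (hU : 0 < U) (hu : ∀ i, |u i| ≤ U)
    (hρ : ∀ i, 0 ≤ ρ i ∧ ρ i ≤ α)
    (hCFL : Δt ≤ gammaCFL ψ α * Δx / (2 * U)) :
    ∀ i, updateExplicit ψ Δx Δt ρ u i ≤ α := by
  obtain ⟨hα, -, -, hψα, hψpos⟩ := hψ
  -- ψ is nonnegative on [0, α]
  have hψnn : ∀ s, 0 ≤ s → s ≤ α → 0 ≤ ψ s := by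
    intro s hs hsα
    rcases eq_or_lt_of_le hsα with h | h
    · simp [h, hψα]
    · have h1 := hψpos s hs (ne_of_lt h)
      nlinarith
  -- properties of gammaCFL
  have hne : ((fun s => (α - s) / (α * ψ s)) '' Set.Ico 0 α).Nonempty :=
    ⟨_, Set.mem_image_of_mem _ (Set.mem_Ico.mpr ⟨le_refl 0, hα⟩)⟩
  have hmem : ∀ x ∈ ((fun s => (α - s) / (α * ψ s)) '' Set.Ico 0 α), 0 ≤ x := by
    rintro x ⟨s, ⟨hs0, hsα⟩, rfl⟩
    have hψs : 0 < ψ s := by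
      have := hψpos s hs0 (ne_of_lt hsα); nlinarith
    have : 0 < α * ψ s := mul_pos hα hψs
    exact div_nonneg (by linarith) this.le
  have hbdd : BddBelow ((fun s => (α - s) / (α * ψ s)) '' Set.Ico 0 α) := ⟨0, hmem⟩
  have hγ0 : 0 ≤ gammaCFL ψ α := le_csInf hne hmem
  have hγle : ∀ s, 0 ≤ s → s ≤ α → gammaCFL ψ α * (α * ψ s) ≤ α - s := by
    intro s hs hsα
    rcases eq_or_lt_of_le hsα with h | h
    · simp [h, hψα]
    · have hψs : 0 < ψ s := by
        have := hψpos s hs (ne_of_lt h); nlinarith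
      have hd : 0 < α * ψ s := mul_pos hα hψs
      have hle : gammaCFL ψ α ≤ (α - s) / (α * ψ s) :=
        csInf_le hbdd ⟨s, ⟨hs, h⟩, rfl⟩
      calc gammaCFL ψ α * (α * ψ s) ≤ (α - s) / (α * ψ s) * (α * ψ s) :=
            mul_le_mul_of_nonneg_right hle hd.le
        _ = α - s := div_mul_cancel₀ _ hd.ne'
  -- CFL in product form
  have hlam : 0 ≤ Δt / Δx := div_nonneg hΔt.le hΔx.le
  have hlamU : Δt / Δx * U ≤ gammaCFL ψ α / 2 := by
    have h2U : 0 < 2 * U := by linarith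
    have h1 : Δt * (2 * U) ≤ gammaCFL ψ α * Δx := (le_div_iff₀ h2U).mp hCFL
    rw [div_mul_eq_mul_div, div_le_div_iff₀ hΔx two_pos]
    nlinarith
  intro i
  obtain ⟨hE0, hEα, hW0, hWα⟩ := rec_bounds Δx α hΔx ρ hρ i
  obtain ⟨hE'0, hE'α, -, -⟩ := rec_bounds Δx α hΔx ρ hρ (i - 1)
  obtain ⟨-, -, hW'0, hW'α⟩ := rec_bounds Δx α hΔx ρ hρ (i + 1)
  set E := recE 2 Δx ρ i with hE
  set W := recW 2 Δx ρ i with hW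
  set E' := recE 2 Δx ρ (i - 1) with hE'
  set W' := recW 2 Δx ρ (i + 1) with hW'
  have hψE : 0 ≤ ψ E := hψnn E hE0 hEα
  have hψW : 0 ≤ ψ W := hψnn W hW0 hWα
  have hψE' : 0 ≤ ψ E' := hψnn E' hE'0 hE'α
  have hψW' : 0 ≤ ψ W' := hψnn W' hW'0 hW'α
  have hEW : E + W = 2 * ρ i := by rw [hE, hW]; unfold recE recW; ring
  -- velocity bounds
  have hui := abs_le.mp (hu i)
  have hui' := abs_le.mp (hu (i - 1))
  have hmax0 : 0 ≤ max (u (i - 1)) 0 := le_max_right _ _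
  have hmaxU : max (u (i - 1)) 0 ≤ U := max_le hui'.2 hU.le
  have hmin0 : min (u (i - 1)) 0 ≤ 0 := min_le_right _ _
  have hmax0' : 0 ≤ max (u i) 0 := le_max_right _ _
  have hminU : -U ≤ min (u i) 0 := le_min hui.1 (by linarith)
  have hmin0' : min (u i) 0 ≤ 0 := min_le_right _ _
  have hii : i - 1 + 1 = i := by ring
  -- flux bounds
  have hF1 : numFlux ψ Δx ρ u (i - 1) ≤ α * ψ W * U := by
    unfold numFlux
    rw [hii]
    have t1 : recE 2 Δx ρ (i - 1) * ψ W * max (u (i - 1)) 0 ≤ α * ψ W * U := by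
      have h1 : E' * ψ W ≤ α * ψ W := mul_le_mul_of_nonneg_right hE'α hψW
      have h2 : 0 ≤ α * ψ W := mul_nonneg hα.le hψW
      calc E' * ψ W * max (u (i - 1)) 0 ≤ α * ψ W * max (u (i - 1)) 0 :=
            mul_le_mul_of_nonneg_right h1 hmax0
        _ ≤ α * ψ W * U := mul_le_mul_of_nonneg_left hmaxU h2
    have t2 : recW 2 Δx ρ i * ψ (recE 2 Δx ρ (i - 1)) * min (u (i - 1)) 0 ≤ 0 :=
      mul_nonpos_of_nonneg_of_nonpos (mul_nonneg hW0 hψE') hmin0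
    linarith
  have hF2 : -(numFlux ψ Δx ρ u i) ≤ α * ψ E * U := by
    unfold numFlux
    have t1 : 0 ≤ E * ψ W' * max (u i) 0 :=
      mul_nonneg (mul_nonneg hE0 hψW') hmax0'
    have t2 : -(α * ψ E * U) ≤ W' * ψ E * min (u i) 0 := by
      have h1 : W' * ψ E ≤ α * ψ E := mul_le_mul_of_nonneg_right hW'α hψE
      have h2 : 0 ≤ α * ψ E := mul_nonneg hα.le hψE
      calc -(α * ψ E * U) = α * ψ E * (-U) := by ring
        _ ≤ α * ψ E * min (u i) 0 := mul_le_mul_of_nonneg_left hminU h2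
        _ ≤ W' * ψ E * min (u i) 0 := by
            rcases le_or_gt (min (u i) 0) 0 with h | h
            · exact mul_le_mul_of_nonpos_right h1 h
            · linarith
    linarith
  -- CFL-based bounds
  have key1 : Δt / Δx * (α * ψ E * U) ≤ (α - E) / 2 := by
    have h1 : 0 ≤ α * ψ E := mul_nonneg hα.le hψE
    have h2 : Δt / Δx * U * (α * ψ E) ≤ gammaCFL ψ α / 2 * (α * ψ E) :=
      mul_le_mul_of_nonneg_right hlamU h1
    have h3 := hγle E hE0 hEα
    nlinarith
  have key2 : Δt / Δx * (α * ψ W * U) ≤ (α - W) / 2 := by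
    have h1 : 0 ≤ α * ψ W := mul_nonneg hα.le hψW
    have h2 : Δt / Δx * U * (α * ψ W) ≤ gammaCFL ψ α / 2 * (α * ψ W) :=
      mul_le_mul_of_nonneg_right hlamU h1
    have h3 := hγle W hW0 hWα
    nlinarith
  -- combine
  unfold updateExplicit
  have b1 : Δt / Δx * (-(numFlux ψ Δx ρ u i)) ≤ Δt / Δx * (α * ψ E * U) :=
    mul_le_mul_of_nonneg_left hF2 hlam
  have b2 : Δt / Δx * numFlux ψ Δx ρ u (i - 1) ≤ Δt / Δx * (α * ψ W * U) :=
    mul_le_mul_of_nonneg_left hF1 hlam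
  nlinarith
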